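/- Let G be a graph, let x be a positive integer, and let D ≥ 1 be a real number. If |E_w^x| < D^x for every vertex w, then |E_w^{ix}| < D^{ix} for every vertex w and every integer i ≥ 1. -/

import Mathlib

open SimpleGraph

variable {V : Type*}

/-- The set of vertices at distance at most `r` from `u` in `G`. -/
def vball (G : SimpleGraph V) (u : V) (r : ℕ) : Set V :=
  {w | ∃ p : G.Walk u w, p.length ≤ r}

/-- The set of edges at distance at most `r` from `u` in `G`, where the distance
from `u` to an edge is one more than the distance to its closer endpoint. -/
def eball (G : SimpleGraph V) (u : V) (r : ℕ) : Set (Sym2 V) :=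
  {e | e ∈ G.edgeSet ∧ ∃ a ∈ e, ∃ p : G.Walk u a, p.length + 1 ≤ r}

/-- The ball graph `B(v,R)`: vertices at distance ≤ R from `v` together with
all edges at distance ≤ R from `v`, as a subgraph of `G`. -/
def ballSub (G : SimpleGraph V) (v : V) (R : ℕ) : G.Subgraph where
  verts := vball G v R
  Adj a b := G.Adj a b ∧
    ((∃ p : G.Walk v a, p.length + 1 ≤ R) ∨ (∃ p : G.Walk v b, p.length + 1 ≤ R))
  adj_sub h := h.1
  edge_vert := by
    rintro a b ⟨hab, ⟨p, hp⟩ | ⟨p, hp⟩⟩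
    · exact ⟨p, by omega⟩
    · exact ⟨p.concat hab.symm, by rw [SimpleGraph.Walk.length_concat]; omega⟩
  symm := by
    constructor
    rintro a b ⟨hab, h⟩
    exact ⟨hab.symm, h.symm⟩

/-- The graph `G \ {s}`: delete the vertex `s` together with its incident edges. -/
def delVert (G : SimpleGraph V) (s : V) : SimpleGraph V where
  Adj a b := G.Adj a b ∧ a ≠ s ∧ b ≠ s
  symm := by constructor; rintro a b ⟨h, ha, hb⟩; exact ⟨h.symm, hb, ha⟩
  loopless := by constructor; rintro a ⟨h, _, _⟩; exact G.irrefl h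

/-- The set of vertices at distance exactly `r` from `u` in `G`. -/
def vsphere (G : SimpleGraph V) (u : V) (r : ℕ) : Set V :=
  {w | (∃ p : G.Walk u w, p.length = r) ∧ ∀ q : G.Walk u w, r ≤ q.length}

private lemma walk_split {G : SimpleGraph V} {w a : V} (p : G.Walk w a) :
    ∀ n : ℕ, n ≤ p.length →
    ∃ (u : V) (q : G.Walk w u) (r : G.Walk u a),
      q.length = n ∧ q.length + r.length = p.length := by
  intro n
  induction n with
  | zero => exact fun _ => ⟨w, Walk.nil, p, rfl, by simp⟩
  | succ n ih =>
    intro hn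
    obtain ⟨u, q, r, hq, hqr⟩ := ih (by omega)
    cases r with
    | nil => simp at hqr; omega
    | @cons _ v _ h r' =>
      refine ⟨v, q.concat h, r', ?_, ?_⟩
      · rw [Walk.length_concat]; omega
      · rw [Walk.length_concat]; simp [Walk.length_cons] at hqr ⊢; omega

private lemma adj_of_length_one {G : SimpleGraph V} {u a : V} (r : G.Walk u a)
    (h : r.length = 1) : G.Adj u a := by
  have h1 := r.adj_getVert_succ (i := 0) (by omega)
  have h2 : r.getVert 1 = a := by rw [← h]; exact r.getVert_length
  rwa [r.getVert_zero, h2] at h1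

private lemma sphere_mem_unique {G : SimpleGraph V} {w : V} {x : ℕ} {e : Sym2 V}
    (he : e ∈ eball G w x) {u u' : V} (hu : u ∈ e) (hu' : u' ∈ e)
    (hs : u ∈ vsphere G w x) (hs' : u' ∈ vsphere G w x) : u = u' := by
  obtain ⟨_, a, ha, p, hp⟩ := he
  have hna : a ∉ vsphere G w x := fun hc => by have := hc.2 p; omega
  have hb := Sym2.other_spec ha
  have h1 : u = a ∨ u = Sym2.Mem.other ha := by rw [← hb, Sym2.mem_iff] at hu; exact hu
  have h2 : u' = a ∨ u' = Sym2.Mem.other ha := by rw [← hb, Sym2.mem_iff] at hu'; exact hu'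
  rcases h1 with h1 | h1 <;> rcases h2 with h2 | h2 <;> subst h1 <;> subst h2
  · rfl
  · exact absurd hs hna
  · exact absurd hs' hna
  · rfl

private lemma exists_edge_of_sphere {G : SimpleGraph V} {w u : V} {x : ℕ} (hx : 0 < x)
    (hu : u ∈ vsphere G w x) : ∃ e ∈ eball G w x, u ∈ e := by
  obtain ⟨⟨p, hp⟩, _⟩ := hu
  obtain ⟨v, q, r, hq, hqr⟩ := walk_split p (x - 1) (by omega)
  have hr : r.length = 1 := by omega
  exact ⟨s(v, u), ⟨adj_of_length_one r hr, v, by simp, q, by omega⟩, by simp⟩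

private lemma cover {G : SimpleGraph V} {w : V} {x m : ℕ} (hx : 0 < x) (hm : 0 < m) :
    eball G w (x + m) ⊆
      (eball G w x \ {e ∈ eball G w x | ∃ u ∈ e, u ∈ vsphere G w x}) ∪
        ⋃ u ∈ vsphere G w x, eball G u m := by
  intro e he
  obtain ⟨hE, a0, ha0, p0, hp0⟩ := he
  set W : Set ℕ := {n | ∃ a ∈ e, ∃ p : G.Walk w a, p.length = n} with hW
  have hWne : W.Nonempty := ⟨p0.length, a0, ha0, p0, rfl⟩
  have hLmem := Nat.sInf_mem hWne
  set L := sInf W with hLdef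
  obtain ⟨a, ha, p, hp⟩ := hLmem
  have hmin : ∀ b ∈ e, ∀ q : G.Walk w b, L ≤ q.length :=
    fun b hb q => Nat.sInf_le ⟨b, hb, q, rfl⟩
  have hL : L + 1 ≤ x + m := by have := hmin a0 ha0 p0; omega
  by_cases hcase : L + 1 ≤ x
  · have heb : e ∈ eball G w x := ⟨hE, a, ha, p, by omega⟩
    by_cases hT : ∃ u ∈ e, u ∈ vsphere G w x
    · obtain ⟨u, hue, hus⟩ := hT
      exact Or.inr (Set.mem_biUnion hus ⟨hE, u, hue, Walk.nil, by simp; omega⟩)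
    · exact Or.inl ⟨heb, fun hc => hT hc.2⟩
  · obtain ⟨u, q, r, hq, hqr⟩ := walk_split p x (by omega)
    have hus : u ∈ vsphere G w x := by
      refine ⟨⟨q, hq⟩, fun q' => ?_⟩
      by_contra hcon
      push_neg at hcon
      have h3 := hmin a ha (q'.append r)
      rw [Walk.length_append] at h3
      omega
    exact Or.inr (Set.mem_biUnion hus ⟨hE, a, ha, r, by omega⟩)

private lemma ncard_biUnion_le' {α β : Type*} [Fintype β] (s : Finset α) (f : α → Set β) :
    (⋃ a ∈ s, f a).ncard ≤ ∑ a ∈ s, (f a).ncard := by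
  classical
  induction s using Finset.induction_on with
  | empty => simp
  | @insert a s ha ih =>
    rw [Finset.set_biUnion_insert, Finset.sum_insert ha]
    exact le_trans (Set.ncard_union_le _ _) (by omega)

private lemma key [Fintype V] {G : SimpleGraph V} {x m : ℕ} (hx : 0 < x) (hm : 0 < m)
    {D : ℝ} (hD : 1 ≤ D)
    (hbx : ∀ w : V, ((eball G w x).ncard : ℝ) < D ^ x)
    (hbm : ∀ w : V, ((eball G w m).ncard : ℝ) < D ^ m) (w : V) :
    ((eball G w (x + m)).ncard : ℝ) < D ^ (x + m) := by
  classical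
  set S : Set V := vsphere G w x with hS
  set T : Set (Sym2 V) := {e ∈ eball G w x | ∃ u ∈ e, u ∈ S} with hT
  have hTsub : T ⊆ eball G w x := Set.sep_subset _ _
  -- |S| ≤ |T|
  have hST : S.ncard ≤ T.ncard := by
    set g : V → Sym2 V := fun u => if h : ∃ e ∈ T, u ∈ e then h.choose else s(u, u) with hg
    have hgspec : ∀ u ∈ S, g u ∈ T ∧ u ∈ g u := by
      intro u hu
      have hex : ∃ e ∈ T, u ∈ e := by
        obtain ⟨e, he, hue⟩ := exists_edge_of_sphere hx hu
        exact ⟨e, ⟨he, u, hue, hu⟩, hue⟩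
      rw [hg]; simp only [dif_pos hex]
      exact ⟨hex.choose_spec.1, hex.choose_spec.2⟩
    refine Set.ncard_le_ncard_of_injOn g (fun u hu => (hgspec u hu).1) ?_ (Set.toFinite T)
    intro u hu u' hu' heq
    exact sphere_mem_unique (hTsub (hgspec u hu).1) (hgspec u hu).2
      (heq ▸ (hgspec u' hu').2) hu hu'
  -- counting
  have h1 : (eball G w (x + m)).ncard ≤
      (eball G w x \ T).ncard + (⋃ u ∈ S, eball G u m).ncard :=
    le_trans (Set.ncard_le_ncard (cover hx hm) (Set.toFinite _)) (Set.ncard_union_le _ _)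
  have hUeq : (⋃ u ∈ S, eball G u m) = ⋃ u ∈ S.toFinset, eball G u m := by
    ext e; simp [Set.mem_toFinset]
  have h2 : (⋃ u ∈ S, eball G u m).ncard ≤ ∑ u ∈ S.toFinset, (eball G u m).ncard := by
    rw [hUeq]; exact ncard_biUnion_le' _ _
  have h3 : (∑ u ∈ S.toFinset, ((eball G u m).ncard : ℝ)) ≤ (S.ncard : ℝ) * D ^ m := by
    rw [Set.ncard_eq_toFinset_card' S]
    calc (∑ u ∈ S.toFinset, ((eball G u m).ncard : ℝ))
        ≤ ∑ _u ∈ S.toFinset, D ^ m := Finset.sum_le_sum (fun u _ => (hbm u).le)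
      _ = (S.toFinset.card : ℝ) * D ^ m := by rw [Finset.sum_const, nsmul_eq_mul]
  have hDm : (1 : ℝ) ≤ D ^ m := one_le_pow₀ hD
  have hDmpos : (0 : ℝ) < D ^ m := lt_of_lt_of_le one_pos hDm
  have h4 : (eball G w x \ T).ncard + S.ncard ≤ (eball G w x).ncard := by
    have := Set.ncard_diff_add_ncard_of_subset hTsub (Set.toFinite _)
    omega
  have hcast : ((eball G w (x + m)).ncard : ℝ) ≤
      ((eball G w x \ T).ncard : ℝ) + (S.ncard : ℝ) * D ^ m := by
    have := h1.trans (Nat.add_le_add_left h2 _)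
    calc ((eball G w (x + m)).ncard : ℝ)
        ≤ (((eball G w x \ T).ncard + ∑ u ∈ S.toFinset, (eball G u m).ncard : ℕ) : ℝ) := by
          exact_mod_cast this
      _ = ((eball G w x \ T).ncard : ℝ) + ∑ u ∈ S.toFinset, ((eball G u m).ncard : ℝ) := by
          push_cast; ring
      _ ≤ _ := by linarith [h3]
  calc ((eball G w (x + m)).ncard : ℝ)
      ≤ ((eball G w x \ T).ncard : ℝ) + (S.ncard : ℝ) * D ^ m := hcast
    _ ≤ ((eball G w x \ T).ncard : ℝ) * D ^ m + (S.ncard : ℝ) * D ^ m := by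
        nlinarith [Nat.cast_nonneg (α := ℝ) (eball G w x \ T).ncard]
    _ = (((eball G w x \ T).ncard : ℝ) + (S.ncard : ℝ)) * D ^ m := by ring
    _ ≤ ((eball G w x).ncard : ℝ) * D ^ m := by
        have : (((eball G w x \ T).ncard : ℝ) + (S.ncard : ℝ)) ≤ ((eball G w x).ncard : ℝ) := by
          exact_mod_cast h4
        nlinarith
    _ < D ^ x * D ^ m := by nlinarith [hbx w]
    _ = D ^ (x + m) := (pow_add D x m).symm

/-- If `|E_w^x| < D^x` for every vertex `w`, then `|E_w^{ix}| < D^{ix}` for every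
vertex `w` and every integer `i ≥ 1`. -/
theorem stmt_3 [Fintype V] (G : SimpleGraph V) (x : ℕ) (hx : 0 < x)
    (D : ℝ) (hD : 1 ≤ D)
    (h : ∀ w : V, ((eball G w x).ncard : ℝ) < D ^ x) :
    ∀ (w : V) (i : ℕ), 1 ≤ i → ((eball G w (i * x)).ncard : ℝ) < D ^ (i * x) := by
  have main : ∀ i : ℕ, 1 ≤ i → ∀ w : V,
      ((eball G w (i * x)).ncard : ℝ) < D ^ (i * x) := by
    intro i
    induction i with
    | zero => omega
    | succ i ih =>
      intro _ w
      rcases Nat.eq_zero_or_pos i with h0 | h0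
      · subst h0; simpa using h w
      · have hmx : (i + 1) * x = x + i * x := by ring
        rw [hmx]
        exact key hx (Nat.mul_pos h0 hx) hD h (fun u => ih h0 u) w
  exact fun w i hi => main i hi w
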